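/- Let g be of type A_n with adapted ι, and suppose for some k both conditions (1) k < n and ι^{(k)} > ι^{(k+1)}, and (2) k > 1 and ι^{(k)} > ι^{(k-1)} hold. Then λ^{(k)} = [1, 2, ..., k−1, k+1]^A_{−P(k−1)} + ⟨λ, h_k⟩, i.e., the defining linear form λ^{(k)} = −x_{1,k} + x_{1,k−1} + x_{1,k+1} + ⟨λ, h_k⟩ equals the column tableau function Σ_{i=1}^{k−1} box^A_i(−P(k−1)+k−i) + box^A_{k+1}(−P(k−1)) plus ⟨λ, h_k⟩. -/

import Mathlib

/-! Combinatorics of an adapted sequence `ι` for a classical Lie algebra, and the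
column-tableau linear forms of Kanakubo–Nakashima in re-indexed coordinates `x_{m,j}`
(the coordinate for the `m`-th occurrence of the index `j` in `ι`). -/

noncomputable section

/-- First position `m ≥ 1` with `ι m ∈ {i, j}`. -/
def firstBoth (ι : ℕ → ℕ) (i j : ℕ) : ℕ := sInf {m | 1 ≤ m ∧ (ι m = i ∨ ι m = j)}

/-- `p_{i,j} = 1` if `i` occurs before `j` in `ι`, and `0` otherwise. -/
def pOf (ι : ℕ → ℕ) (i j : ℕ) : ℕ := if ι (firstBoth ι i j) = i then 1 else 0

/-- `ι⁽ⁱ⁾`, the first position of `ι` at which `i` occurs. -/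
def firstOcc (ι : ℕ → ℕ) (i : ℕ) : ℕ := sInf {m | 1 ≤ m ∧ ι m = i}

/-- `P(k) = p_{2,1} + p_{3,2} + ⋯ + p_{k,k-1}` (so `P 0 = P 1 = 0`). -/
def Pof (ι : ℕ → ℕ) (k : ℕ) : ℕ := ∑ i ∈ Finset.Icc 2 k, pOf ι i (i - 1)

/-- The condition that every index `1,…,n` occurs infinitely often in `ι` and
consecutive entries of `ι` differ. -/
def SeqCond (n : ℕ) (ι : ℕ → ℕ) : Prop :=
  (∀ m, 1 ≤ m → 1 ≤ ι m ∧ ι m ≤ n) ∧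
  (∀ m, 1 ≤ m → ι m ≠ ι (m + 1)) ∧
  (∀ i, 1 ≤ i → i ≤ n → ∀ N : ℕ, ∃ m, N < m ∧ ι m = i)

/-- `ι` is adapted to the type `A_n` Cartan matrix: for adjacent indices `i, j`, any two
consecutive members of the subsequence of `ι` consisting of `i`'s and `j`'s differ. -/
def AdaptedA (n : ℕ) (ι : ℕ → ℕ) : Prop :=
  ∀ i j : ℕ, 1 ≤ i → i ≤ n → 1 ≤ j → j ≤ n → (i = j + 1 ∨ j = i + 1) →
    ∀ m m' : ℕ, 1 ≤ m → m < m' → (ι m = i ∨ ι m = j) → (ι m' = i ∨ ι m' = j) →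
      (∀ r, m < r → r < m' → ι r ≠ i ∧ ι r ≠ j) → ι m ≠ ι m'

/-- Linear forms on `ℚ^∞`, presented by their coefficients in the re-indexed
coordinates `x_{m,j}`. -/
abbrev LinF : Type := ℤ × ℕ → ℚ

/-- The coordinate functional `x_{m,j}` (zero when `m ≤ 0`, `j = 0` or `j > n`). -/
def XT (n : ℕ) (m : ℤ) (j : ℕ) : LinF :=
  fun q => if q = (m, j) ∧ 1 ≤ m ∧ 1 ≤ j ∧ j ≤ n then 1 else 0

/-- The box `⌈j⌉^A_s = x_{s+P(j),j} − x_{s+P(j−1)+1,j−1}` of type `A_n`. -/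
def boxA (n : ℕ) (ι : ℕ → ℕ) (j : ℕ) (s : ℤ) : LinF :=
  XT n (s + (Pof ι j : ℤ)) j - XT n (s + (Pof ι (j - 1) : ℤ) + 1) (j - 1)

/-- The column tableau `[j₁,…,j_k]^A_s = Σ_{i=1}^k ⌈j_i⌉^A_{s+k−i}` (here `j` is
`0`-indexed: `j ⟨0⟩ = j₁, …`). -/
def tabA (n : ℕ) (ι : ℕ → ℕ) {k : ℕ} (j : Fin k → ℕ) (s : ℤ) : LinF :=
  ∑ i : Fin k, boxA n ι (j i) (s + (k : ℤ) - 1 - ((i : ℕ) : ℤ))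

/-- The Nakashima–Zelevinsky form `β_{m,j}` in re-indexed coordinates, for `ι` adapted
to a type `A` Cartan matrix:
`β_{m,j} = x_{m,j} + x_{m+1,j} − x_{m+p_{j−1,j},j−1} − x_{m+p_{j+1,j},j+1}`. -/
def betaA (n : ℕ) (ι : ℕ → ℕ) (m : ℤ) (j : ℕ) : LinF :=
  XT n m j + XT n (m + 1) j - XT n (m + (pOf ι (j - 1) j : ℤ)) (j - 1)
    - XT n (m + (pOf ι (j + 1) j : ℤ)) (j + 1)

/-- Affine-linear forms: a constant term together with a linear form. -/
abbrev AffF : Type := ℚ × LinF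

/-- The form `β⁽⁻⁾_{m,j}` in re-indexed coordinates: `β_{m−1,j}` when `m ≥ 2`, and the
`λ`-dependent form with constant term `−⟨h_j, λ⟩` when `m = 1`. -/
def betaMA (n : ℕ) (ι : ℕ → ℕ) (lam : ℕ → ℤ) (m : ℤ) (j : ℕ) : AffF :=
  ((if m = 1 then -(lam j : ℚ) else 0), betaA n ι (m - 1) j)

/-- The operator `Ŝ_{m,j}` of the polyhedral realization of `B(λ)` in re-indexed
coordinates. -/
def ShatA (n : ℕ) (ι : ℕ → ℕ) (lam : ℕ → ℤ) (m : ℤ) (j : ℕ) (φ : AffF) : AffF :=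
  if 0 < φ.2 (m, j) then φ - φ.2 (m, j) • (((0 : ℚ), betaA n ι m j) : AffF)
  else φ - φ.2 (m, j) • betaMA n ι lam m j

end

/-! The order of first occurrences gives `p_{k,k−1} = 0` and `p_{k+1,k} = 1`, hence
`P(k) = P(k−1)` and `P(k+1) = P(k−1) + 1`.  The column `[1,…,k−1]` telescopes to the single
coordinate `x_{s+P(k−1),k−1}`, and appending the box `k+1` at `s = −P(k−1)` then gives
exactly `x_{1,k−1} + x_{1,k+1} − x_{1,k}`. -/

lemma firstBoth_comm (ι : ℕ → ℕ) (i j : ℕ) : firstBoth ι i j = firstBoth ι j i := by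
  simp only [firstBoth, or_comm]

lemma apply_firstBoth_of_firstOcc_lt (ι : ℕ → ℕ) {i j : ℕ}
    (hj : ∃ m, 1 ≤ m ∧ ι m = j) (h : firstOcc ι j < firstOcc ι i) :
    ι (firstBoth ι i j) = j := by
  have hmemj : firstOcc ι j ∈ {m | 1 ≤ m ∧ ι m = j} := Nat.sInf_mem hj
  have hmem : firstBoth ι i j ∈ {m | 1 ≤ m ∧ (ι m = i ∨ ι m = j)} :=
    Nat.sInf_mem ⟨firstOcc ι j, hmemj.1, Or.inr hmemj.2⟩
  refine hmem.2.resolve_left fun hi => ?_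
  have hj_le : firstBoth ι i j ≤ firstOcc ι j := Nat.sInf_le ⟨hmemj.1, Or.inr hmemj.2⟩
  have hi_le : firstOcc ι i ≤ firstBoth ι i j := Nat.sInf_le ⟨hmem.1, hi⟩
  omega

lemma pOf_eq_zero_of_firstOcc_lt (ι : ℕ → ℕ) {i j : ℕ} (hij : i ≠ j)
    (hj : ∃ m, 1 ≤ m ∧ ι m = j) (h : firstOcc ι j < firstOcc ι i) : pOf ι i j = 0 := by
  simp [pOf, apply_firstBoth_of_firstOcc_lt ι hj h, hij.symm]

lemma pOf_eq_one_of_firstOcc_lt (ι : ℕ → ℕ) {i j : ℕ}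
    (hi : ∃ m, 1 ≤ m ∧ ι m = i) (h : firstOcc ι i < firstOcc ι j) : pOf ι i j = 1 := by
  rw [pOf, firstBoth_comm, apply_firstBoth_of_firstOcc_lt ι hi h, if_pos rfl]

lemma Pof_succ (ι : ℕ → ℕ) {m : ℕ} (hm : 1 ≤ m) :
    Pof ι (m + 1) = Pof ι m + pOf ι (m + 1) m := by
  rw [Pof, Pof, Finset.sum_Icc_succ_top (by omega : 2 ≤ m + 1), Nat.add_sub_cancel]

lemma XT_zero_right (n : ℕ) (m : ℤ) : XT n m 0 = 0 := by
  funext q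
  simp [XT]

lemma tabA_succ (n : ℕ) (ι : ℕ → ℕ) {r : ℕ} (j : Fin (r + 1) → ℕ) (s : ℤ) :
    tabA n ι j s =
      tabA n ι (fun i : Fin r => j i.castSucc) (s + 1) + boxA n ι (j (Fin.last r)) s := by
  rw [tabA, tabA, Fin.sum_univ_castSucc]
  congr 1
  · refine Finset.sum_congr rfl fun i _ => ?_
    simp only [Fin.val_castSucc]
    congr 1
    push_cast
    ring
  · simp only [Fin.val_last]
    congr 1
    push_cast
    ring

lemma tabA_consecutive (n : ℕ) (ι : ℕ → ℕ) (r : ℕ) (s : ℤ) :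
    tabA n ι (fun i : Fin r => (i : ℕ) + 1) s = XT n (s + Pof ι r) r := by
  induction r generalizing s with
  | zero => simp [tabA, Pof, XT_zero_right]
  | succ r ih =>
    rw [tabA_succ]
    simp only [Fin.val_castSucc, Fin.val_last]
    rw [ih, boxA, Nat.add_sub_cancel, add_right_comm s 1]
    abel

lemma tabA_consecutive_snoc_skip (n : ℕ) (ι : ℕ → ℕ) (r : ℕ) (s : ℤ) :
    tabA n ι (fun i : Fin (r + 1) => if (i : ℕ) < r then (i : ℕ) + 1 else r + 2) s =
      XT n (s + 1 + Pof ι r) r + XT n (s + Pof ι (r + 2)) (r + 2)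
        - XT n (s + Pof ι (r + 1) + 1) (r + 1) := by
  rw [tabA_succ]
  simp only [Fin.val_castSucc, Fin.is_lt, if_true, Fin.val_last, lt_irrefl, if_false]
  rw [tabA_consecutive, boxA, add_sub_assoc]
  rfl

theorem lamk_eq_tableau_general (n : ℕ) (ι : ℕ → ℕ) (lam : ℕ → ℤ)
    (hseq : SeqCond n ι)
    (k : ℕ) (hk1 : 1 < k) (hkn : k < n)
    (h1 : firstOcc ι (k + 1) < firstOcc ι k)
    (h2 : firstOcc ι (k - 1) < firstOcc ι k) :
    (((lam k : ℚ), XT n 1 (k - 1) + XT n 1 (k + 1) - XT n 1 k) : AffF) =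
      ((lam k : ℚ),
        tabA n ι (fun i : Fin k => if (i : ℕ) < k - 1 then (i : ℕ) + 1 else k + 1)
          (-(Pof ι (k - 1) : ℤ))) := by
  obtain ⟨r, rfl⟩ : ∃ r, k = r + 1 := ⟨k - 1, by omega⟩
  have hr : 1 ≤ r := by omega
  have occurs : ∀ j, 1 ≤ j → j ≤ n → ∃ m, 1 ≤ m ∧ ι m = j := fun j hj hjn =>
    hseq.2.2 j hj hjn 0
  have hp0 : pOf ι (r + 1) r = 0 :=
    pOf_eq_zero_of_firstOcc_lt ι (by omega) (occurs r hr (by omega)) h2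
  have hp1 : pOf ι (r + 2) (r + 1) = 1 :=
    pOf_eq_one_of_firstOcc_lt ι (occurs (r + 2) (by omega) hkn) h1
  have hP1 : Pof ι (r + 1) = Pof ι r := by rw [Pof_succ ι hr, hp0, add_zero]
  have hP2 : Pof ι (r + 2) = Pof ι r + 1 := by rw [Pof_succ ι (by omega), hp1, hP1]
  simp only [Nat.add_sub_cancel, tabA_consecutive_snoc_skip, hP1, hP2, Prod.mk.injEq, true_and]
  push_cast
  ring_nf

/-- Type `A_n`, `ι` adapted, `1 < k < n` with both `ι⁽ᵏ⁾ > ι⁽ᵏ⁺¹⁾` and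
`ι⁽ᵏ⁾ > ι⁽ᵏ⁻¹⁾`.  Then
`λ⁽ᵏ⁾ = −x_{1,k} + x_{1,k−1} + x_{1,k+1} + ⟨λ,h_k⟩` equals the column tableau function
`[1,2,…,k−1,k+1]^A_{−P(k−1)} + ⟨λ,h_k⟩`. -/
theorem lamk_eq_tableau (n : ℕ) (ι : ℕ → ℕ) (lam : ℕ → ℤ)
    (hseq : SeqCond n ι) (had : AdaptedA n ι)
    (k : ℕ) (hk1 : 1 < k) (hkn : k < n)
    (h1 : firstOcc ι (k + 1) < firstOcc ι k)
    (h2 : firstOcc ι (k - 1) < firstOcc ι k) :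
    (((lam k : ℚ), XT n 1 (k - 1) + XT n 1 (k + 1) - XT n 1 k) : AffF) =
      ((lam k : ℚ),
        tabA n ι (fun i : Fin k => if (i : ℕ) < k - 1 then (i : ℕ) + 1 else k + 1)
          (-(Pof ι (k - 1) : ℤ))) :=
  lamk_eq_tableau_general n ι lam hseq k hk1 hkn h1 h2
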